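/- arXiv:1402.1481 — 2 statements merged into one kernel-verified Lean document; each statement's English description precedes it below -/
import Mathlib

section
/- Let G be a finitely generated group with finite generating set S, and let Y ⊆ G be an infinite subset such that the pair (G,Y) has relative Property T. Then there exists C > 0 such that for every finite quotient Q of G and every function f from Q to a Hilbert space, for every y ∈ Y one has Σ_{g∈Q} ‖f(g·ȳ) − f(g)‖² ≤ C · Σ_{g∈Q, s∈S} ‖f(g·s̄) − f(g)‖², where ȳ and s̄ denote the images of y and s in Q. -/
open MeasureTheory Filter Set

noncomputable section

/-- The word distance on a group `G` with respect to a (symmetrized) generating set `S`. -/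
def wordDist {G : Type*} [Group G] (S : Set G) (x y : G) : ℕ :=
  sInf {n : ℕ | ∃ l : List G, l.length = n ∧ (∀ a ∈ l, a ∈ S ∨ a⁻¹ ∈ S) ∧ x⁻¹ * y = l.prod}

/-- A function `[0,∞) → [0,∞)` is proper if it tends to `∞` at `∞`. -/
def ProperFun (ρ : ℝ → ℝ) : Prop := Tendsto ρ atTop atTop

/-- A coarse embedding of a sequence of spaces (given by distance functions `d n`) into a
space `Y` with distance function `dY`. -/
def IsCoarseEmbeddingSeq {X : ℕ → Type*} (d : ∀ n, X n → X n → ℝ)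
    {Y : Type*} (dY : Y → Y → ℝ) (φ : ∀ n, X n → Y) : Prop :=
  ∃ ρ γ : ℝ → ℝ, ProperFun ρ ∧ ProperFun γ ∧
    ∀ n x y, ρ (d n x y) ≤ dY (φ n x) (φ n y) ∧ dY (φ n x) (φ n y) ≤ γ (d n x y)

/-- An affine isometric action of a group `G` on a (real) Hilbert space, given by an
orthogonal representation `π` together with a `1`-cocycle `b`. -/
structure AffIsomAction (G : Type) [Group G] where
  (H : Type)
  [normed : NormedAddCommGroup H]
  [ips : InnerProductSpace ℝ H]
  [complete : CompleteSpace H]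
  (π : G →* (H ≃ₗᵢ[ℝ] H))
  (b : G → H)
  (cocycle : ∀ g h : G, b (g * h) = π g (b h) + b g)

attribute [instance] AffIsomAction.normed AffIsomAction.ips AffIsomAction.complete

/-- The pair `(G, Y)` has relative Property (T): for every affine isometric action of `G`
on a Hilbert space, the orbits of `Y` are bounded. -/
def RelPropT (G : Type) [Group G] (Y : Set G) : Prop :=
  ∀ A : AffIsomAction G, ∀ v : A.H, ∃ M : ℝ, ∀ y ∈ Y, ‖A.π y v + A.b y‖ ≤ M

/-- `G`, finitely generated by `S`, has the Haagerup property: it admits an affine isometric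
action on a Hilbert space whose cocycle is a coarse embedding for the word metric of `S`. -/
def HasHaagerup (G : Type) [Group G] (S : Set G) : Prop :=
  ∃ A : AffIsomAction G, ∃ ρ γ : ℝ → ℝ, ProperFun ρ ∧ ProperFun γ ∧
    ∀ x y : G, ρ (wordDist S x y) ≤ ‖A.b x - A.b y‖ ∧ ‖A.b x - A.b y‖ ≤ γ (wordDist S x y)

/-- The diameter of a subset `A` of a graph `X` for the graph metric. -/
def setGraphDiam {V : Type*} (X : SimpleGraph V) (A : Set V) : ℕ :=
  sSup {k | ∃ x ∈ A, ∃ y ∈ A, X.dist x y = k}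

/-- A sequence of finite connected graphs of uniformly bounded degree, of cardinalities tending to
infinity, and with Cheeger constants uniformly bounded below, i.e. an expander. -/
structure IsExpanderSeq {V : ℕ → Type*} (X : ∀ n, SimpleGraph (V n)) : Prop where
  (finite : ∀ n, Finite (V n))
  (connected : ∀ n, (X n).Connected)
  (degBound : ∃ d : ℕ, ∀ n v, ((X n).neighborSet v).ncard ≤ d)
  (cardTop : Tendsto (fun n => Nat.card (V n)) atTop atTop)
  (cheeger : ∃ c : ℝ, 0 < c ∧ ∀ n (A : Set (V n)), A.Nonempty →
      2 * A.ncard ≤ Nat.card (V n) →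
      c * A.ncard ≤ ({e : V n × V n | e.1 ∈ A ∧ e.2 ∉ A ∧ (X n).Adj e.1 e.2}).ncard)

/-- A weak embedding of a sequence of finite graphs into a sequence of spaces with distance
functions `dY n`: the maps are uniformly Lipschitz and fibers of balls are asymptotically
negligible. -/
def IsWeakEmbedding {V : ℕ → Type*} (X : ∀ n, SimpleGraph (V n)) {Y : ℕ → Type*}
    (dY : ∀ n, Y n → Y n → ℝ) (φ : ∀ n, V n → Y n) : Prop :=
  (∃ K : ℝ, 0 < K ∧ ∀ n x y, dY n (φ n x) (φ n y) ≤ K * (X n).dist x y) ∧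
  ∀ R > (0:ℝ), ∀ ε > (0:ℝ), ∃ N : ℕ, ∀ n ≥ N, ∀ x : V n,
    (({x' : V n | dY n (φ n x') (φ n x) ≤ R}).ncard : ℝ) ≤ ε * Nat.card (V n)

end

/-!
If no constant works, then for every `k` there are an orthogonal representation of `G`, a vector
`v_k` and `y_k ∈ Y` with `‖y_k v_k - v_k‖² > 4^k ∑_{s ∈ S} ‖s v_k - v_k‖²`; after rescaling,
`‖y_k v_k - v_k‖² = 2^k` while `∑_{s ∈ S} ‖s v_k - v_k‖² ≤ 2^{-k}`. The coboundaries
`g ↦ g v_k - v_k` are then square-summable in `k` on the generators, hence on all of `G`, so they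
assemble into a cocycle of the `ℓ²`-direct sum of the representations. Relative Property (T)
bounds it on `Y`, contradicting `‖y_k v_k - v_k‖² = 2^k`. A function on a finite quotient `Q` is a
vector of the right-regular representation on `ℓ²(Q, E)`, and for it the inequality is the one
above.
-/

noncomputable section

open scoped ENNReal

section lpCongrRight

variable {𝕜 ι : Type*} [NormedField 𝕜] {E F : ι → Type*} [∀ i, NormedAddCommGroup (E i)]
  [∀ i, NormedAddCommGroup (F i)] [∀ i, NormedSpace 𝕜 (E i)] [∀ i, NormedSpace 𝕜 (F i)]
  {p : ℝ≥0∞} [Fact (1 ≤ p)]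

def LinearIsometryEquiv.lpCongrRight (e : ∀ i, E i ≃ₗᵢ[𝕜] F i) : lp E p ≃ₗᵢ[𝕜] lp F p where
  toFun f := ⟨fun i => e i (f i), (lp.memℓp f).mono' fun i => (e i).norm_map _ |>.le⟩
  invFun f := ⟨fun i => (e i).symm (f i), (lp.memℓp f).mono' fun i => (e i).symm.norm_map _ |>.le⟩
  map_add' f g := by ext i; exact map_add (e i) (f i) (g i)
  map_smul' c f := by ext i; simp
  left_inv f := by ext i; simp
  right_inv f := by ext i; simp
  norm_map' f := by
    have hp : p ≠ 0 := (zero_lt_one.trans_le Fact.out).ne'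
    exact le_antisymm (lp.norm_mono hp fun i => (e i).norm_map _ |>.le)
      (lp.norm_mono hp fun i => (e i).norm_map _ |>.ge)

@[simp]
theorem LinearIsometryEquiv.lpCongrRight_apply (e : ∀ i, E i ≃ₗᵢ[𝕜] F i) (f : lp E p) (i : ι) :
    LinearIsometryEquiv.lpCongrRight e f i = e i (f i) := rfl

variable (𝕜 E p) in
def LinearIsometryEquiv.lpCongrRightHom :
    (∀ i, E i ≃ₗᵢ[𝕜] E i) →* (lp E p ≃ₗᵢ[𝕜] lp E p) where
  toFun := lpCongrRight
  map_one' := by ext; simp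
  map_mul' e e' := by ext; simp

end lpCongrRight

section rightRegular

variable (𝕜 : Type*) [Semiring 𝕜] (p : ℝ≥0∞) (Q E : Type*) [Fact (1 ≤ p)] [Group Q] [Fintype Q]
  [SeminormedAddCommGroup E] [Module 𝕜 E]

def PiLp.rightRegular : Q →* ((PiLp p fun _ : Q => E) ≃ₗᵢ[𝕜] PiLp p fun _ : Q => E) where
  toFun c := LinearIsometryEquiv.piLpCongrLeft p 𝕜 E (Equiv.mulRight c).symm
  map_one' := by ext; simp
  map_mul' c d := by ext; simp [mul_assoc]

end rightRegular

theorem PiLp.norm_rightRegular_sub_sq {𝕜 Q E : Type*} [Semiring 𝕜] [Group Q] [Fintype Q]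
    [SeminormedAddCommGroup E] [Module 𝕜 E] (c : Q) (F : PiLp 2 fun _ : Q => E) :
    ‖PiLp.rightRegular 𝕜 2 Q E c F - F‖ ^ 2 = ∑ x, ‖F (x * c) - F x‖ ^ 2 := by
  rw [PiLp.norm_sq_eq_of_L2]
  rfl

section coboundary

variable {G : Type*} [Group G]

theorem map_mul_apply_sub_self {𝕜 H : Type*} [Semiring 𝕜] [SeminormedAddCommGroup H]
    [Module 𝕜 H] (π : G →* (H ≃ₗᵢ[𝕜] H)) (v : H) (g h : G) :
    π (g * h) v - v = π g (π h v - v) + (π g v - v) := by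
  rw [map_mul, LinearIsometryEquiv.coe_mul, Function.comp_apply, map_sub]
  abel

theorem norm_map_inv_apply_sub_self {𝕜 H : Type*} [Semiring 𝕜] [SeminormedAddCommGroup H]
    [Module 𝕜 H] (π : G →* (H ≃ₗᵢ[𝕜] H)) (v : H) (g : G) :
    ‖π g⁻¹ v - v‖ = ‖π g v - v‖ := by
  have hv : π g (π g⁻¹ v) = v := by
    rw [← Function.comp_apply (f := π g), ← LinearIsometryEquiv.coe_mul, ← map_mul,
      mul_inv_cancel, map_one, LinearIsometryEquiv.coe_one, id]
  rw [← (π g).norm_map, map_sub, hv, norm_sub_rev]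

theorem memℓp_map_apply_sub_self_of_closure_eq_top {𝕜 ι : Type*} [NormedField 𝕜] {E : ι → Type*}
    [∀ i, NormedAddCommGroup (E i)] [∀ i, NormedSpace 𝕜 (E i)] {p : ℝ≥0∞}
    (π : ∀ i, G →* (E i ≃ₗᵢ[𝕜] E i)) (v : ∀ i, E i) {S : Set G}
    (hS : Subgroup.closure S = ⊤) (hv : ∀ s ∈ S, Memℓp (fun i => π i s (v i) - v i) p) (g : G) :
    Memℓp (fun i => π i g (v i) - v i) p := by
  induction (hS ▸ Subgroup.mem_top g : g ∈ Subgroup.closure S) using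
    Subgroup.closure_induction with
  | mem s hs => exact hv s hs
  | one => simpa using zero_mem_ℓp'
  | mul g h _ _ hg hh =>
    simp only [map_mul_apply_sub_self]
    exact (hh.mono' fun i => ((π i g).norm_map _).le).add hg
  | inv g _ hg => exact hg.mono' fun i => (norm_map_inv_apply_sub_self (π i) (v i) g).le

end coboundary

section normalize

variable {G H : Type*} [Group G] [NormedAddCommGroup H] [NormedSpace ℝ H]

theorem norm_map_smul_sub_smul_sq (π : G →* (H ≃ₗᵢ[ℝ] H)) (t : ℝ) (v : H) (g : G) :
    ‖π g (t • v) - t • v‖ ^ 2 = t ^ 2 * ‖π g v - v‖ ^ 2 := by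
  rw [map_smul, ← smul_sub, norm_smul, mul_pow, Real.norm_eq_abs, sq_abs]

theorem exists_rescaling_of_mul_sum_lt (π : G →* (H ≃ₗᵢ[ℝ] H)) {S : Finset G} {v : H} {y : G}
    {C : ℝ} (hC : 0 < C) (hv : C * ∑ s ∈ S, ‖π s v - v‖ ^ 2 < ‖π y v - v‖ ^ 2)
    {a : ℝ} (ha : 0 ≤ a) :
    ∃ w : H, ‖π y w - w‖ ^ 2 = a ∧ ∑ s ∈ S, ‖π s w - w‖ ^ 2 ≤ a / C := by
  set L := ‖π y v - v‖ ^ 2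
  have hL : 0 < L := (mul_nonneg hC.le (Finset.sum_nonneg fun _ _ => by positivity)).trans_lt hv
  refine ⟨√(a / L) • v, ?_, ?_⟩
  · rw [norm_map_smul_sub_smul_sq, Real.sq_sqrt (by positivity), div_mul_cancel₀ a hL.ne']
  · simp only [norm_map_smul_sub_smul_sq, Real.sq_sqrt (div_nonneg ha hL.le), ← Finset.mul_sum]
    rw [le_div_iff₀ hC]
    calc a / L * (∑ s ∈ S, ‖π s v - v‖ ^ 2) * C = a / L * (C * ∑ s ∈ S, ‖π s v - v‖ ^ 2) := by
          ring
      _ ≤ a / L * L := by gcongr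
      _ = a := div_mul_cancel₀ a hL.ne'

end normalize

theorem RelPropT.exists_bound_of_memℓp {G : Type} [Group G] {Y : Set G} (hT : RelPropT G Y)
    {ι : Type} {E : ι → Type} [∀ i, NormedAddCommGroup (E i)] [∀ i, InnerProductSpace ℝ (E i)]
    [∀ i, CompleteSpace (E i)] (π : ∀ i, G →* (E i ≃ₗᵢ[ℝ] E i)) (v : ∀ i, E i)
    (hv : ∀ g, Memℓp (fun i => π i g (v i) - v i) 2) :
    ∃ M, ∀ y ∈ Y, ∀ i, ‖π i y (v i) - v i‖ ≤ M := by
  let A : AffIsomAction G :=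
    { H := lp E 2
      π := (LinearIsometryEquiv.lpCongrRightHom ℝ E 2).comp (MonoidHom.pi π)
      b := fun g => ⟨fun i => π i g (v i) - v i, hv g⟩
      cocycle := fun g h => by ext i; exact map_mul_apply_sub_self (π i) (v i) g h }
  obtain ⟨M, hM⟩ := hT A 0
  refine ⟨M, fun y hy i => ?_⟩
  calc ‖π i y (v i) - v i‖ ≤ ‖A.b y‖ := lp.norm_apply_le_norm two_ne_zero (A.b y) i
    _ ≤ M := by simpa using hM y hy

theorem RelPropT.exists_poincare_const {G : Type} [Group G] {S : Finset G}
    (hS : Subgroup.closure (S : Set G) = ⊤) {Y : Set G} (hT : RelPropT G Y) :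
    ∃ C > 0, ∀ (H : Type) [NormedAddCommGroup H] [InnerProductSpace ℝ H] [CompleteSpace H]
      (π : G →* (H ≃ₗᵢ[ℝ] H)) (v : H), ∀ y ∈ Y,
        ‖π y v - v‖ ^ 2 ≤ C * ∑ s ∈ S, ‖π s v - v‖ ^ 2 := by
  by_contra! h
  choose H _ _ _ π v y hy hviol using fun k : ℕ => h (4 ^ k) (by positivity)
  choose w hwy hws using fun k =>
    exists_rescaling_of_mul_sum_lt (π k) (by positivity) (hviol k) (pow_nonneg zero_le_two k)
  have hgen : ∀ s ∈ S, Memℓp (fun k => π k s (w k) - w k) 2 := fun s hs => by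
    refine memℓp_gen <| (summable_geometric_of_lt_one (by norm_num) (by norm_num : (2⁻¹ : ℝ) < 1))
      |>.of_nonneg_of_le (fun _ => by positivity) fun k => ?_
    rw [ENNReal.toReal_ofNat, Real.rpow_two]
    calc ‖π k s (w k) - w k‖ ^ 2 ≤ ∑ s ∈ S, ‖π k s (w k) - w k‖ ^ 2 :=
          Finset.single_le_sum (f := fun s => ‖π k s (w k) - w k‖ ^ 2)
            (fun _ _ => by positivity) hs
      _ ≤ 2 ^ k / 4 ^ k := hws k
      _ = 2⁻¹ ^ k := by rw [← div_pow]; norm_num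
  obtain ⟨M, hM⟩ := hT.exists_bound_of_memℓp π w
    (memℓp_map_apply_sub_self_of_closure_eq_top π w hS hgen)
  obtain ⟨k, hk⟩ := pow_unbounded_of_one_lt (M ^ 2) (one_lt_two (α := ℝ))
  have hMk := hM (y k) (hy k) k
  have := hwy k
  nlinarith [norm_nonneg (π k (y k) (w k) - w k)]

theorem relative_poincare_of_relPropT_general
    (G : Type) [Group G] (S : Finset G) (hS : Subgroup.closure (S : Set G) = ⊤)
    (Y : Set G) (hT : RelPropT G Y) :
    ∃ C : ℝ, 0 < C ∧
      ∀ (Q : Type) [Group Q] [Fintype Q], ∀ (q : G →* Q), Function.Surjective q →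
      ∀ (E : Type) [NormedAddCommGroup E] [InnerProductSpace ℝ E] [CompleteSpace E],
      ∀ (f : Q → E), ∀ y ∈ Y,
        ∑ g : Q, ‖f (g * q y) - f g‖ ^ 2 ≤
          C * ∑ g : Q, ∑ s ∈ S, ‖f (g * q s) - f g‖ ^ 2 := by
  obtain ⟨C, hC, hpoincare⟩ := hT.exists_poincare_const hS
  refine ⟨C, hC, fun Q _ _ q _ E _ _ _ f y hy => ?_⟩
  have key := hpoincare _ ((PiLp.rightRegular ℝ 2 Q E).comp q) (WithLp.toLp 2 f) y hy
  simp only [MonoidHom.comp_apply, PiLp.norm_rightRegular_sub_sq] at key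
  rwa [Finset.sum_comm] at key

/-- If `G` is generated by the finite set `S` and `(G,Y)` has relative
Property (T) for an infinite subset `Y ⊆ G`, then there is `C > 0` such that every function
from a finite quotient of `G` to a Hilbert space satisfies the relative Poincaré inequality. -/
theorem relative_poincare_of_relPropT
    (G : Type) [Group G] (S : Finset G) (hS : Subgroup.closure (S : Set G) = ⊤)
    (Y : Set G) (hY : Y.Infinite) (hT : RelPropT G Y) :
    ∃ C : ℝ, 0 < C ∧
      ∀ (Q : Type) [Group Q] [Fintype Q], ∀ (q : G →* Q), Function.Surjective q →
      ∀ (E : Type) [NormedAddCommGroup E] [InnerProductSpace ℝ E] [CompleteSpace E],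
      ∀ (f : Q → E), ∀ y ∈ Y,
        ∑ g : Q, ‖f (g * q y) - f g‖ ^ 2 ≤
          C * ∑ g : Q, ∑ s ∈ S, ‖f (g * q s) - f g‖ ^ 2 :=
  relative_poincare_of_relPropT_general G S hS Y hT

end
end

section
/- Let θ : [0,∞) → [0,∞) be a proper function, and let (A_n, d_n) be a sequence of abelian groups equipped with invariant metrics d_n such that for every r, every ball of radius r in every A_n has cardinality at most θ(r). Then the sequence (A_n, d_n) is uniformly amenable: for all ε > 0 and r > 0, there exists D > 0 such that for every n there is a subset F_n ⊆ A_n of diameter ≤ D with |gF_n △ F_n| ≤ ε|F_n| for every g ∈ A_n with d_n(e,g) ≤ r. -/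
open MeasureTheory Filter Set

noncomputable section

/-!
Let `S` be the ball of radius `r`, so `1 ∈ S = S⁻¹` and `|S| ≤ M := ⌈θ r⌉`. As the group is
abelian, every element of `S ^ k` is a product `∏ s ∈ S, s ^ f s` with `f ≤ k`, so
`|S ^ k| ≤ (k + 1) ^ M`: the powers of `S` grow polynomially, uniformly in `n`. Choosing `K` with
`(2K + 1) ^ M < (1 + ε) ^ K`, the ratios `|S ^ (2j + 2)| / |S ^ (2j)|` cannot all exceed `1 + ε`
for `j < K`, and for such a `j` the set `F = S ^ (2j + 1)` works: `gF ∆ F ⊆ S ^ (2j + 2) \ S ^ (2j)`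
for `g ∈ S`, and `F` has diameter at most `2 (2j + 1) r`.
-/

open scoped Pointwise Finset

lemma exists_odd_pow_lt_pow (M : ℕ) {c : ℝ} (hc : 1 < c) :
    ∃ K : ℕ, 0 < K ∧ ((2 * K + 1 : ℕ) : ℝ) ^ M < c ^ K := by
  obtain ⟨K, hK, hK1⟩ := ((tendsto_pow_const_div_const_pow_of_one_lt M hc).eventually
    (gt_mem_nhds (by positivity : (0 : ℝ) < (3 ^ M)⁻¹))).and (eventually_ge_atTop 1) |>.exists
  refine ⟨K, hK1, ?_⟩
  have hK1' : (1 : ℝ) ≤ K := by exact_mod_cast hK1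
  rw [div_lt_iff₀ (by positivity), inv_mul_eq_div, lt_div_iff₀ (by positivity)] at hK
  calc ((2 * K + 1 : ℕ) : ℝ) ^ M ≤ (3 * K) ^ M := by gcongr; push_cast; linarith
    _ = K ^ M * 3 ^ M := by ring
    _ < c ^ K := hK

lemma exists_lt_le_mul_of_lt_pow {b : ℕ → ℝ} {c : ℝ} (hc : 0 ≤ c) {K : ℕ} (h0 : 1 ≤ b 0)
    (hK : b K < c ^ K) : ∃ j < K, b (j + 1) ≤ c * b j := by
  by_contra! hgrow
  have hpow : ∀ j ≤ K, c ^ j ≤ b j := by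
    intro j hj
    induction j with
    | zero => simpa using h0
    | succ j ih =>
      calc c ^ (j + 1) = c * c ^ j := pow_succ' c j
        _ ≤ c * b j := by gcongr; exact ih (by omega)
        _ ≤ b (j + 1) := (hgrow j (by omega)).le
  exact (hpow K le_rfl).not_gt hK

namespace Finset

variable {G : Type*} [CommMonoid G] [DecidableEq G]

lemma exists_prod_pow_eq_of_mem_pow {T : Finset G} {k : ℕ} {x : G} (hx : x ∈ T ^ k) :
    ∃ f : T → ℕ, (∀ u, f u ≤ k) ∧ ∏ u : T, (u : G) ^ f u = x := by
  induction k generalizing x with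
  | zero =>
    rw [pow_zero, mem_one] at hx
    exact ⟨0, fun _ => le_rfl, by simp [hx]⟩
  | succ k ih =>
    rw [pow_succ] at hx
    obtain ⟨y, hy, u, hu, rfl⟩ := mem_mul.1 hx
    obtain ⟨f, hfk, rfl⟩ := ih hy
    refine ⟨fun v => f v + if (⟨u, hu⟩ : T) = v then 1 else 0, fun v => ?_, ?_⟩
    · have := hfk v
      dsimp only
      split_ifs <;> omega
    · simp only [pow_add, prod_mul_distrib, prod_pow_boole, mem_univ, if_true]

lemma card_pow_le_succ_pow_card (T : Finset G) (k : ℕ) : #(T ^ k) ≤ (k + 1) ^ #T :=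
  calc #(T ^ k)
      ≤ #((univ : Finset (T → Fin (k + 1))).image fun f => ∏ u : T, (u : G) ^ (f u : ℕ)) := by
        refine card_le_card fun x hx => ?_
        obtain ⟨f, hfk, rfl⟩ := exists_prod_pow_eq_of_mem_pow hx
        exact mem_image.2 ⟨fun u => ⟨f u, Nat.lt_succ_of_le (hfk u)⟩, mem_univ _, rfl⟩
    _ ≤ (k + 1) ^ #T := card_image_le.trans (by simp)

end Finset

section InvariantDist

variable {G : Type*} {d : G → G → ℝ}

lemma dist_one_mul_le [Monoid G] (htri : ∀ x y z, d x z ≤ d x y + d y z)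
    (hinv : ∀ g x y, d (g * x) (g * y) = d x y) (a b : G) :
    d 1 (a * b) ≤ d 1 a + d 1 b :=
  calc d 1 (a * b) ≤ d 1 a + d a (a * b) := htri _ _ _
    _ = d 1 a + d 1 b := by rw [← hinv a 1 b, mul_one]

lemma dist_one_le_of_mem_pow [Monoid G] (hzero : ∀ x, d x x = 0)
    (htri : ∀ x y z, d x z ≤ d x y + d y z) (hinv : ∀ g x y, d (g * x) (g * y) = d x y)
    {U : Set G} {r : ℝ} (hU : ∀ u ∈ U, d 1 u ≤ r) {k : ℕ} {x : G} (hx : x ∈ U ^ k) :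
    d 1 x ≤ k * r := by
  induction k generalizing x with
  | zero =>
    rw [pow_zero, Set.mem_one] at hx
    simp [hx, hzero]
  | succ k ih =>
    rw [pow_succ] at hx
    obtain ⟨y, hy, u, hu, rfl⟩ := hx
    calc d 1 (y * u) ≤ d 1 y + d 1 u := dist_one_mul_le htri hinv y u
      _ ≤ k * r + r := add_le_add (ih hy) (hU u hu)
      _ = (k + 1 : ℕ) * r := by push_cast; ring

lemma dist_le_of_mem_pow [Monoid G] (hsymm : ∀ x y, d x y = d y x) (hzero : ∀ x, d x x = 0)
    (htri : ∀ x y z, d x z ≤ d x y + d y z) (hinv : ∀ g x y, d (g * x) (g * y) = d x y)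
    {U : Set G} {r : ℝ} (hU : ∀ u ∈ U, d 1 u ≤ r) {k : ℕ} {x y : G} (hx : x ∈ U ^ k)
    (hy : y ∈ U ^ k) : d x y ≤ 2 * (k * r) :=
  calc d x y ≤ d 1 x + d 1 y := hsymm x 1 ▸ htri x 1 y
    _ ≤ k * r + k * r := add_le_add (dist_one_le_of_mem_pow hzero htri hinv hU hx)
        (dist_one_le_of_mem_pow hzero htri hinv hU hy)
    _ = 2 * (k * r) := by ring

lemma dist_one_inv [Group G] (hsymm : ∀ x y, d x y = d y x)
    (hinv : ∀ g x y, d (g * x) (g * y) = d x y) (g : G) : d 1 g⁻¹ = d 1 g := by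
  rw [← hinv g, mul_one, mul_inv_cancel, hsymm]

end InvariantDist

section Folner

variable {G : Type*} [Group G]

lemma symmDiff_image_mul_pow_subset {U : Set G} (h1 : 1 ∈ U) {g : G} (hg : g ∈ U)
    (hg' : g⁻¹ ∈ U) (k : ℕ) :
    symmDiff ((g * ·) '' U ^ (k + 1)) (U ^ (k + 1)) ⊆ U ^ (k + 2) \ U ^ k := by
  have himage : (g * ·) '' U ^ (k + 1) ⊆ U ^ (k + 2) := by
    rintro _ ⟨x, hx, rfl⟩
    rw [pow_succ' U (k + 1)]
    exact Set.mul_mem_mul hg hx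
  have hpreimage : U ^ k ⊆ (g * ·) '' U ^ (k + 1) := fun x hx =>
    ⟨g⁻¹ * x, by rw [pow_succ']; exact Set.mul_mem_mul hg' hx, mul_inv_cancel_left g x⟩
  have hmono : U ^ k ⊆ U ^ (k + 1) := Set.pow_subset_pow_right h1 k.le_succ
  rintro x (⟨hx, hx'⟩ | ⟨hx, hx'⟩)
  · exact ⟨himage hx, fun hk => hx' (hmono hk)⟩
  · exact ⟨Set.pow_subset_pow_right h1 (k + 1).le_succ hx, fun hk => hx' (hpreimage hk)⟩

lemma ncard_symmDiff_image_mul_pow_le [DecidableEq G] {T : Finset G} (h1 : 1 ∈ T) {g : G}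
    (hg : g ∈ T) (hg' : g⁻¹ ∈ T) {ε : ℝ} (hε : 0 ≤ ε) {k : ℕ}
    (hk : (#(T ^ (k + 2)) : ℝ) ≤ (1 + ε) * #(T ^ k)) :
    ((symmDiff ((g * ·) '' ↑(T ^ (k + 1))) ↑(T ^ (k + 1))).ncard : ℝ) ≤ ε * #(T ^ (k + 1)) := by
  have hsub : symmDiff ((g * ·) '' ↑(T ^ (k + 1))) ↑(T ^ (k + 1)) ⊆ ↑(T ^ (k + 2) \ T ^ k) := by
    push_cast
    exact symmDiff_image_mul_pow_subset h1 hg hg' k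
  have hsdiff :=
    Finset.card_sdiff_add_card_eq_card (Finset.pow_subset_pow_right h1 (by omega : k ≤ k + 2))
  have hmono : #(T ^ k) ≤ #(T ^ (k + 1)) :=
    Finset.card_le_card (Finset.pow_subset_pow_right h1 k.le_succ)
  calc ((symmDiff ((g * ·) '' ↑(T ^ (k + 1))) ↑(T ^ (k + 1))).ncard : ℝ)
      ≤ #(T ^ (k + 2) \ T ^ k) := by
        exact_mod_cast
          (Set.ncard_le_ncard hsub (Finset.finite_toSet _)).trans_eq (Set.ncard_coe_finset _)
    _ ≤ ε * #(T ^ k) := by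
        rw [← Nat.cast_inj (R := ℝ), Nat.cast_add] at hsdiff
        linarith
    _ ≤ ε * #(T ^ (k + 1)) := by gcongr

end Folner

theorem uniformly_amenable_of_uniform_ball_bound_general
    (θ : ℝ → ℝ)
    (A : ℕ → Type) [∀ n, CommGroup (A n)] (d : ∀ n, A n → A n → ℝ)
    (hsymm : ∀ n (x y : A n), d n x y = d n y x)
    (hzero : ∀ n (x : A n), d n x x = 0)
    (htri : ∀ n (x y z : A n), d n x z ≤ d n x y + d n y z)
    (hinv : ∀ n (g x y : A n), d n (g * x) (g * y) = d n x y)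
    (hballfin : ∀ n (r : ℝ), ({x : A n | d n 1 x ≤ r}).Finite)
    (hball : ∀ n (r : ℝ), (({x : A n | d n 1 x ≤ r}).ncard : ℝ) ≤ θ r) :
    ∀ ε > (0 : ℝ), ∀ r > (0 : ℝ), ∃ D > (0 : ℝ), ∀ n, ∃ F : Set (A n),
      F.Finite ∧ F.Nonempty ∧ (∀ x ∈ F, ∀ y ∈ F, d n x y ≤ D) ∧
      ∀ g : A n, d n 1 g ≤ r →
        ((symmDiff ((fun x => g * x) '' F) F).ncard : ℝ) ≤ ε * F.ncard := by
  classical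
  intro ε hε r hr
  obtain ⟨K, hK0, hK⟩ := exists_odd_pow_lt_pow ⌈θ r⌉₊ (lt_add_of_pos_right 1 hε)
  refine ⟨2 * (2 * K * r), by positivity, fun n => ?_⟩
  set T := (hballfin n r).toFinset
  have hT : ∀ x, x ∈ T ↔ d n 1 x ≤ r := fun x => Set.Finite.mem_toFinset _
  have h1 : 1 ∈ T := (hT 1).2 (by rw [hzero]; exact hr.le)
  have hcard : #T ≤ ⌈θ r⌉₊ := by
    have := (hball n r).trans (Nat.le_ceil _)
    rwa [Set.ncard_eq_toFinset_card _ (hballfin n r), Nat.cast_le] at this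
  obtain ⟨j, hjK, hj⟩ := exists_lt_le_mul_of_lt_pow (b := fun j => (#(T ^ (2 * j)) : ℝ))
    (by linarith) (by simp) <| calc
      (#(T ^ (2 * K)) : ℝ) ≤ ((2 * K + 1 : ℕ) : ℝ) ^ #T := by
        exact_mod_cast Finset.card_pow_le_succ_pow_card T (2 * K)
      _ ≤ ((2 * K + 1 : ℕ) : ℝ) ^ ⌈θ r⌉₊ := pow_le_pow_right₀ (by simp) hcard
      _ < (1 + ε) ^ K := hK
  refine ⟨↑(T ^ (2 * j + 1)), Finset.finite_toSet _, ⟨1, Finset.one_mem_pow h1⟩,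
    fun x hx y hy => ?_, fun g hg => ?_⟩
  · rw [Finset.coe_pow] at hx hy
    calc d n x y ≤ 2 * ((2 * j + 1 : ℕ) * r) :=
          dist_le_of_mem_pow (hsymm n) (hzero n) (htri n) (hinv n) (fun u => (hT u).1) hx hy
      _ ≤ 2 * (2 * K * r) := by gcongr; exact_mod_cast (by omega : 2 * j + 1 ≤ 2 * K)
  · rw [Set.ncard_coe_finset]
    exact ncard_symmDiff_image_mul_pow_le h1 ((hT g).2 hg)
      ((hT _).2 (by rwa [dist_one_inv (hsymm n) (hinv n)])) hε.le hj

/-- A sequence of abelian groups with invariant metrics whose balls of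
radius `r` have cardinality at most `θ(r)`, for a fixed proper function `θ`, is uniformly
amenable: for all `ε, r > 0` there is `D > 0` such that every `A n` contains a subset `F` of
diameter `≤ D` with `|gF ∆ F| ≤ ε|F|` for every `g` with `d_n(e,g) ≤ r`. -/
theorem uniformly_amenable_of_uniform_ball_bound
    (θ : ℝ → ℝ) (hθ : ProperFun θ)
    (A : ℕ → Type) [∀ n, CommGroup (A n)] (d : ∀ n, A n → A n → ℝ)
    (hsymm : ∀ n (x y : A n), d n x y = d n y x)
    (hzero : ∀ n (x : A n), d n x x = 0)
    (hpos : ∀ n (x y : A n), x ≠ y → 0 < d n x y)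
    (htri : ∀ n (x y z : A n), d n x z ≤ d n x y + d n y z)
    (hinv : ∀ n (g x y : A n), d n (g * x) (g * y) = d n x y)
    (hballfin : ∀ n (r : ℝ), ({x : A n | d n 1 x ≤ r}).Finite)
    (hball : ∀ n (r : ℝ), (({x : A n | d n 1 x ≤ r}).ncard : ℝ) ≤ θ r) :
    ∀ ε > (0 : ℝ), ∀ r > (0 : ℝ), ∃ D > (0 : ℝ), ∀ n, ∃ F : Set (A n),
      F.Finite ∧ F.Nonempty ∧ (∀ x ∈ F, ∀ y ∈ F, d n x y ≤ D) ∧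
      ∀ g : A n, d n 1 g ≤ r →
        ((symmDiff ((fun x => g * x) '' F) F).ncard : ℝ) ≤ ε * F.ncard :=
  uniformly_amenable_of_uniform_ball_bound_general θ A d hsymm hzero htri hinv hballfin hball

end
end
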